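/- Let k, r ≥ 1 and 0 ≤ m ≤ kr be integers, and fix a subset M of {1,…,k} × {1,…,r} with |M| = m. For each (i,j) ∈ M let f_{i,j}, g_{i,j} : E4 × E2 → E2 be functions such that {(x̄, f_{i,j}(x̄), g_{i,j}(x̄)) : x̄ ∈ E4 × E2} is a 1-perfect code in the Doob graph D(1,3) on vertex set E4 × E2 × E2 × E2, and for each (i,j) ∉ M let f_{i,j}, g_{i,j} : E2^3 → E2 be functions such that {(x̄, f_{i,j}(x̄), g_{i,j}(x̄)) : x̄ ∈ E2^3} is a 1-perfect code in the Hamming graph H(5,4). Let V = Π_{(i,j)} V_{i,j} where V_{i,j} = E4 × E2 for (i,j) ∈ M and V_{i,j} = E2^3 otherwise. Define f : V → E2^k by f(x)_i = Σ_{j=1}^r f_{i,j}(x_{i,j}) and g : V → E2^r by g(x)_j = Σ_{i=1}^k g_{i,j}(x_{i,j}). Let C' ⊆ E2^k and C'' ⊆ E2^r be 1-perfect codes in the Hamming graphs H(k,4) and H(r,4) respectively. Then the set C = {(x, f(x)+c', g(x)+c'') : x ∈ V, c' ∈ C', c'' ∈ C''} is a 1-perfect code in the graph which is the box product of one copy of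 Sh and one copy of K4 for each (i,j) ∈ M, three copies of K4 for each (i,j) ∉ M, and k + r further copies of K4 (this graph is isomorphic to the Doob graph D(m, 3kr − 2m + k + r)). -/

import Mathlib

open SimpleGraph Polynomial

/-- The Galois ring `GR(4²)`, realized as the quotient ring
`(ZMod 4)[X]/(X² + X + 1)`. -/
abbrev E4 : Type := AdjoinRoot (X ^ 2 + X + 1 : Polynomial (ZMod 4))

/-- The Galois field `GF(4)`, realized as `(ZMod 2)[X]/(X² + X + 1)`. -/
abbrev E2 : Type := AdjoinRoot (X ^ 2 + X + 1 : Polynomial (ZMod 2))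

/-- `ω`, the image of `X` in `E4`. -/
noncomputable def ω4 : E4 := AdjoinRoot.root (X ^ 2 + X + 1 : Polynomial (ZMod 4))

/-- `ω`, the image of `X` in `E2`. -/
noncomputable def ω2 : E2 := AdjoinRoot.root (X ^ 2 + X + 1 : Polynomial (ZMod 2))

/-- The set `ε = {1, ω, ω², −1, −ω, −ω²} ⊆ E4`. -/
def epsE4 : Set E4 := {1, ω4, ω4 ^ 2, -1, -ω4, -ω4 ^ 2}

/-- The Shrikhande graph on the 16 elements of `E4`: two vertices are adjacent
iff their difference lies in `ε`. -/
def ShE : SimpleGraph E4 := SimpleGraph.fromRel fun a b => a - b ∈ epsE4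

/-- `C` is a 1-perfect code in `G`: every vertex is at graph distance at most 1
(i.e., equal or adjacent) from exactly one element of `C`. -/
def IsPerfectCode {V : Type*} (G : SimpleGraph V) (C : Set V) : Prop :=
  ∀ v : V, ∃! c : V, c ∈ C ∧ (v = c ∨ G.Adj v c)

/-- The box (Cartesian) product of an indexed family of simple graphs. -/
def boxPi {ι : Type*} {V : ι → Type*} (G : ∀ i, SimpleGraph (V i)) :
    SimpleGraph (∀ i, V i) where
  Adj x y := ∃ i, (G i).Adj (x i) (y i) ∧ ∀ j, j ≠ i → x j = y j
  symm := by
    constructor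
    rintro x y ⟨i, h, he⟩
    exact ⟨i, (G i).adj_symm h, fun j hj => (he j hj).symm⟩
  loopless := by
    constructor
    rintro x ⟨i, h, -⟩
    exact (G i).irrefl h

/-- The Hamming graph `H(n,4)` on `n`-tuples over `E2`. -/
def HamE (n : ℕ) : SimpleGraph (Fin n → E2) :=
  boxPi fun _ : Fin n => (⊤ : SimpleGraph E2)

/-- The vertex type of the cell `(i,j)`: `E4 × E2` for `(i,j) ∈ M` and
`E2³` otherwise. -/
abbrev CellVtx {k r : ℕ} (M : Finset (Fin k × Fin r)) (p : Fin k × Fin r) : Type :=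
  if p ∈ M then E4 × E2 else (Fin 3 → E2)

/-- The graph on the cell `(i,j)`: `Sh □ K₄` (one copy of the Shrikhande graph
and one copy of `K₄`) for `(i,j) ∈ M`, and `K₄ □ K₄ □ K₄` (three copies of
`K₄`) otherwise. -/
noncomputable def CellGraph {k r : ℕ} (M : Finset (Fin k × Fin r))
    (p : Fin k × Fin r) : SimpleGraph (CellVtx M p) :=
  if h : p ∈ M then
    cast (congrArg SimpleGraph (if_pos h).symm) (ShE □ (⊤ : SimpleGraph E2))
  else
    cast (congrArg SimpleGraph (if_neg h).symm)
      (boxPi fun _ : Fin 3 => (⊤ : SimpleGraph E2))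

/-- The big graph: the box product of the cell graphs (one copy of `Sh` and one
copy of `K₄` for each `(i,j) ∈ M`, three copies of `K₄` for each `(i,j) ∉ M`)
and `k + r` further copies of `K₄`. -/
noncomputable def BigGraph (k r : ℕ) (M : Finset (Fin k × Fin r)) :
    SimpleGraph ((∀ p : Fin k × Fin r, CellVtx M p) × (Fin k → E2) × (Fin r → E2)) :=
  (boxPi (CellGraph M)) □ (HamE k □ HamE r)

/-- The Doob graph `D(m,n)` on the vertex set `E4^m × E2^n`. -/
noncomputable def DoobE (m n : ℕ) : SimpleGraph ((Fin m → E4) × (Fin n → E2)) :=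
  (boxPi fun _ : Fin m => ShE) □ (boxPi fun _ : Fin n => (⊤ : SimpleGraph E2))

/-! Write a vertex as `(x, F x + a, G x + b)`, with `F` and `G` the row and column sums of the
cell functions. A codeword `(x₀, F x₀ + c', G x₀ + c'')` is within distance one of it only if
`c'` is within distance one of `a` and `c''` of `b`, so `c'` and `c''` are forced by the perfect
codes `C'` and `C''`. Then `x₀` is forced as well: if `a = c'` or `b = c''` it is `x`; otherwise
`a - c'` and `b - c''` are supported on a single row `i` and a single column `j`, and `x₀` differs
from `x` only in the cell `(i, j)`, where the cell code provides exactly one neighbour of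
`x (i, j)` shifting `f` and `g` by these two nonzero amounts. The isomorphism with the Doob graph
only regroups the factors of the box product. -/

open Function

section BoxProduct

variable {V W : Type*} {G : SimpleGraph V} {H : SimpleGraph W}

lemma boxProd_near_iff {u v : V × W} :
    (u = v ∨ (G □ H).Adj u v) ↔
      (u.1 = v.1 ∨ G.Adj u.1 v.1) ∧ (u.2 = v.2 ∨ H.Adj u.2 v.2) ∧ (u.1 = v.1 ∨ u.2 = v.2) := by
  obtain ⟨u₁, u₂⟩ := u
  obtain ⟨v₁, v₂⟩ := v
  have := G.ne_of_adj (a := u₁) (b := v₁)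
  have := H.ne_of_adj (a := u₂) (b := v₂)
  simp only [boxProd_adj, Prod.mk.injEq]
  tauto

variable {β γ : Type*}

lemma boxProd_top_top_near_iff {u w : V} {s s' : β} {t t' : γ} :
    ((u, s, t) = (w, s', t') ∨ (G □ ((⊤ : SimpleGraph β) □ (⊤ : SimpleGraph γ))).Adj
        (u, s, t) (w, s', t')) ↔
      (u = w ∧ (s = s' ∨ t = t')) ∨ (G.Adj u w ∧ s = s' ∧ t = t') := by
  have := G.ne_of_adj (a := u) (b := w)
  simp only [boxProd_adj, top_adj, Prod.mk.injEq]
  tauto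

variable {ι ι' κ : Type*}

lemma boxPi_adj {V : ι → Type*} {G : ∀ i, SimpleGraph (V i)} {x y : ∀ i, V i} :
    (boxPi G).Adj x y ↔ ∃ i, (G i).Adj (x i) (y i) ∧ ∀ j, j ≠ i → x j = y j :=
  Iff.rfl

def boxProdCongr {V₁ V₂ W₁ W₂ : Type*} {G₁ : SimpleGraph V₁} {G₂ : SimpleGraph V₂}
    {H₁ : SimpleGraph W₁} {H₂ : SimpleGraph W₂} (e : G₁ ≃g G₂) (e' : H₁ ≃g H₂) :
    boxProd G₁ H₁ ≃g boxProd G₂ H₂ where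
  toEquiv := e.toEquiv.prodCongr e'.toEquiv
  map_rel_iff' := by
    rintro ⟨a, b⟩ ⟨c, d⟩
    simp [boxProd_adj, e.map_adj_iff, e'.map_adj_iff]

def boxPiCongr {V : ι → Type*} {V' : ι' → Type*} {G : ∀ i, SimpleGraph (V i)}
    {G' : ∀ i', SimpleGraph (V' i')} (e : ι ≃ ι') (h : ∀ i, G i ≃g G' (e i)) :
    boxPi G ≃g boxPi G' where
  toEquiv := Equiv.piCongr e fun i => (h i).toEquiv
  map_rel_iff' {x y} := by
    simp only [boxPi_adj, ← e.exists_congr_right, Equiv.piCongr_apply_apply]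
    refine exists_congr fun i => and_congr (h i).map_adj_iff ?_
    rw [← e.forall_congr_right]
    simp [Equiv.piCongr_apply_apply]

def boxPiCongrRight {V V' : ι → Type*} {G : ∀ i, SimpleGraph (V i)}
    {G' : ∀ i, SimpleGraph (V' i)} (h : ∀ i, G i ≃g G' i) : boxPi G ≃g boxPi G' :=
  boxPiCongr (Equiv.refl ι) h

def boxPiConstCongr {V : Type*} (e : ι ≃ ι') (G : SimpleGraph V) :
    (boxPi fun _ : ι => G) ≃g boxPi fun _ : ι' => G :=
  boxPiCongr e fun _ => Iso.refl

def boxPiSum {V : ι ⊕ κ → Type*} (G : ∀ s, SimpleGraph (V s)) :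
    boxPi G ≃g (boxPi fun i => G (.inl i)) □ (boxPi fun j => G (.inr j)) where
  toEquiv := Equiv.sumPiEquivProdPi V
  map_rel_iff' {x y} := by
    simp only [boxProd_adj, boxPi_adj, Sum.exists, Sum.forall, Equiv.sumPiEquivProdPi_apply,
      funext_iff, ne_eq, reduceCtorEq, not_false_eq_true, Sum.inl.injEq, Sum.inr.injEq,
      forall_const]
    aesop

def boxPiBoxProd {V W : ι → Type*} (G : ∀ i, SimpleGraph (V i)) (H : ∀ i, SimpleGraph (W i)) :
    (boxPi fun i => G i □ H i) ≃g boxPi G □ boxPi H where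
  toEquiv := Equiv.arrowProdEquivProdArrow ι V W
  map_rel_iff' {x y} := by
    simp only [boxProd_adj, boxPi_adj, Equiv.arrowProdEquivProdArrow_apply, funext_iff,
      Prod.ext_iff]
    constructor
    · rintro (⟨⟨i, hi, hoff⟩, h₂⟩ | ⟨⟨i, hi, hoff⟩, h₁⟩)
      · exact ⟨i, .inl ⟨hi, h₂ i⟩, fun j hj => ⟨hoff j hj, h₂ j⟩⟩
      · exact ⟨i, .inr ⟨hi, h₁ i⟩, fun j hj => ⟨h₁ j, hoff j hj⟩⟩
    · rintro ⟨i, ⟨hi, h₂⟩ | ⟨hi, h₁⟩, hoff⟩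
      · refine .inl ⟨⟨i, hi, fun j hj => (hoff j hj).1⟩, fun j => ?_⟩
        rcases eq_or_ne j i with rfl | hj
        exacts [h₂, (hoff j hj).2]
      · refine .inr ⟨⟨i, hi, fun j hj => (hoff j hj).2⟩, fun j => ?_⟩
        rcases eq_or_ne j i with rfl | hj
        exacts [h₁, (hoff j hj).1]

def boxPiCurry {V : ι → κ → Type*} (G : ∀ i j, SimpleGraph (V i j)) :
    (boxPi fun p : ι × κ => G p.1 p.2) ≃g boxPi fun i => boxPi (G i) where
  toEquiv :=
    { toFun x i j := x (i, j)
      invFun x p := x p.1 p.2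
      left_inv _ := rfl
      right_inv _ := rfl }
  map_rel_iff' {x y} := by
    simp only [boxPi_adj, Prod.exists, Prod.forall, funext_iff, Equiv.coe_fn_mk]
    constructor
    · rintro ⟨i, ⟨j, hij, hoff⟩, hoff'⟩
      refine ⟨i, j, hij, fun i' j' h => ?_⟩
      rcases eq_or_ne i' i with rfl | hi
      · exact hoff j' fun hj => h (by rw [hj])
      · exact hoff' i' hi j'
    · rintro ⟨i, j, hij, hoff⟩
      exact ⟨i, ⟨j, hij, fun j' hj' => hoff i j' (by simp [hj'])⟩,
        fun i' hi' j' => hoff i' j' (by simp [hi'])⟩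

end BoxProduct

section Hamming

lemma Pi.single_eq_single_of_ne_zero {ι A : Type*} [DecidableEq ι] [Zero A] {i i' : ι}
    {δ δ' : A} (h : (Pi.single i δ : ι → A) = Pi.single i' δ') (hδ' : δ' ≠ 0) :
    i = i' ∧ δ = δ' := by
  have hi : i' = i := by
    by_contra hne
    exact hδ' (by simpa [hne] using (congrFun h i').symm)
  subst hi
  exact ⟨rfl, by simpa using congrFun h i'⟩

def hammingGraph (ι A : Type*) : SimpleGraph (ι → A) := boxPi fun _ : ι => ⊤

variable {ι A : Type*} [DecidableEq ι] [AddCommGroup A]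

lemma hammingGraph_adj_iff {u v : ι → A} :
    (hammingGraph ι A).Adj u v ↔ ∃ i δ, δ ≠ 0 ∧ u = v + Pi.single i δ := by
  constructor
  · rintro ⟨i, hi, hoff⟩
    refine ⟨i, u i - v i, sub_ne_zero.2 hi, funext fun j => ?_⟩
    by_cases hj : j = i
    · subst hj; simp [add_sub_cancel]
    · simp [hj, hoff j hj]
  · rintro ⟨i, δ, hδ, rfl⟩
    exact ⟨i, by simpa using hδ, fun j hj => by simp [hj]⟩

lemma hammingGraph_near_add_single (u : ι → A) (i : ι) (δ : A) :
    u + Pi.single i δ = u ∨ (hammingGraph ι A).Adj (u + Pi.single i δ) u := by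
  rcases eq_or_ne δ 0 with rfl | hδ
  · simp
  · exact .inr (hammingGraph_adj_iff.2 ⟨i, δ, hδ, rfl⟩)

lemma hammingGraph_adj_add_left {t u v : ι → A} :
    (hammingGraph ι A).Adj (t + u) (t + v) ↔ (hammingGraph ι A).Adj u v := by
  simp only [hammingGraph_adj_iff, add_assoc, add_right_inj]

end Hamming

section GraphCode

variable {W β γ : Type*} {G : SimpleGraph W} {f : W → β} {g : W → γ}

def graphCode (f : W → β) (g : W → γ) : Set (W × β × γ) := {q | ∃ w, q = (w, f w, g w)}

namespace IsPerfectCode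

lemma graphCode_ne_of_adj
    (h : IsPerfectCode (G □ ((⊤ : SimpleGraph β) □ (⊤ : SimpleGraph γ))) (graphCode f g))
    {u w : W} (hadj : G.Adj u w) : f w ≠ f u ∧ g w ≠ g u := by
  constructor <;> intro heq
  · have := (h (u, f u, g w)).unique
      ⟨⟨u, rfl⟩, boxProd_top_top_near_iff.2 (.inl ⟨rfl, .inl rfl⟩)⟩
      ⟨⟨w, rfl⟩, boxProd_top_top_near_iff.2 (.inr ⟨hadj, heq.symm, rfl⟩)⟩
    exact hadj.ne (congrArg Prod.fst this)
  · have := (h (u, f w, g u)).unique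
      ⟨⟨u, rfl⟩, boxProd_top_top_near_iff.2 (.inl ⟨rfl, .inr rfl⟩)⟩
      ⟨⟨w, rfl⟩, boxProd_top_top_near_iff.2 (.inr ⟨hadj, rfl, heq.symm⟩)⟩
    exact hadj.ne (congrArg Prod.fst this)

lemma graphCode_exists_adj
    (h : IsPerfectCode (G □ ((⊤ : SimpleGraph β) □ (⊤ : SimpleGraph γ))) (graphCode f g))
    {u : W} {s : β} {t : γ} (hs : s ≠ f u) (ht : t ≠ g u) :
    ∃ w, G.Adj u w ∧ f w = s ∧ g w = t := by
  obtain ⟨_, ⟨⟨w, rfl⟩, hnear⟩, -⟩ := h (u, s, t)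
  rcases boxProd_top_top_near_iff.1 hnear with ⟨rfl, hs' | ht'⟩ | ⟨hadj, hs', ht'⟩
  · exact absurd hs' hs
  · exact absurd ht' ht
  · exact ⟨w, hadj, hs'.symm, ht'.symm⟩

lemma graphCode_unique_adj
    (h : IsPerfectCode (G □ ((⊤ : SimpleGraph β) □ (⊤ : SimpleGraph γ))) (graphCode f g))
    {u w w' : W} (hw : G.Adj u w) (hw' : G.Adj u w')
    (hf : f w = f w') (hg : g w = g w') : w = w' :=
  congrArg Prod.fst <| (h (u, f w, g w)).unique
    ⟨⟨w, rfl⟩, boxProd_top_top_near_iff.2 (.inr ⟨hw, rfl, rfl⟩)⟩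
    ⟨⟨w', rfl⟩, boxProd_top_top_near_iff.2 (.inr ⟨hw', hf, hg⟩)⟩

end IsPerfectCode

end GraphCode

section ProductCode

variable {ι κ A : Type*} [AddCommGroup A] {W : ι × κ → Type*} {G : ∀ p, SimpleGraph (W p)}
  {f g : ∀ p, W p → A}

def rowSum [Fintype κ] (f : ∀ p, W p → A) (x : ∀ p, W p) : ι → A :=
  fun i => ∑ j, f (i, j) (x (i, j))

def colSum [Fintype ι] (g : ∀ p, W p → A) (x : ∀ p, W p) : κ → A :=
  fun j => ∑ i, g (i, j) (x (i, j))

def productCode [Fintype ι] [Fintype κ] (f g : ∀ p, W p → A) (C' : Set (ι → A))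
    (C'' : Set (κ → A)) :
    Set ((∀ p, W p) × (ι → A) × (κ → A)) :=
  {q | ∃ x c' c'', c' ∈ C' ∧ c'' ∈ C'' ∧ q = (x, rowSum f x + c', colSum g x + c'')}

lemma rowSum_update [Fintype κ] [DecidableEq ι] [DecidableEq κ] (x : ∀ p, W p) (i : ι) (j : κ)
    (w : W (i, j)) :
    rowSum f (update x (i, j) w) =
      rowSum f x + Pi.single i (f (i, j) w - f (i, j) (x (i, j))) := by
  ext i'
  rcases eq_or_ne i' i with rfl | hi
  · rw [Pi.add_apply, Pi.single_eq_same, ← sub_eq_iff_eq_add', rowSum, rowSum,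
      ← Finset.sum_sub_distrib, Fintype.sum_eq_single j fun j' hj' => by simp [hj']]
    simp
  · simp [rowSum, hi]

lemma colSum_update [Fintype ι] [DecidableEq ι] [DecidableEq κ] (x : ∀ p, W p) (i : ι) (j : κ)
    (w : W (i, j)) :
    colSum g (update x (i, j) w) =
      colSum g x + Pi.single j (g (i, j) w - g (i, j) (x (i, j))) := by
  ext j'
  rcases eq_or_ne j' j with rfl | hj
  · rw [Pi.add_apply, Pi.single_eq_same, ← sub_eq_iff_eq_add', colSum, colSum,
      ← Finset.sum_sub_distrib, Fintype.sum_eq_single i fun i' hi' => by simp [hi']]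
    simp
  · simp [colSum, hj]

variable [Fintype ι] [Fintype κ] [DecidableEq ι] [DecidableEq κ]

lemma near_productCode_iff {x x₀ : ∀ p, W p} {a c' : ι → A} {b c'' : κ → A} :
    ((x, rowSum f x + a, colSum g x + b) = (x₀, rowSum f x₀ + c', colSum g x₀ + c'') ∨
      (boxPi G □ (hammingGraph ι A □ hammingGraph κ A)).Adj
        (x, rowSum f x + a, colSum g x + b) (x₀, rowSum f x₀ + c', colSum g x₀ + c'')) ↔
    (x₀ = x ∧ (a = c' ∨ (hammingGraph ι A).Adj a c') ∧
        (b = c'' ∨ (hammingGraph κ A).Adj b c'') ∧ (a = c' ∨ b = c'')) ∨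
      ∃ i j w, (G (i, j)).Adj (x (i, j)) w ∧ x₀ = update x (i, j) w ∧
        a = c' + Pi.single i (f (i, j) w - f (i, j) (x (i, j))) ∧
        b = c'' + Pi.single j (g (i, j) w - g (i, j) (x (i, j))) := by
  rw [boxProd_near_iff]
  rcases eq_or_ne x₀ x with rfl | hx
  · have hno_move : ¬ ∃ i j w, (G (i, j)).Adj (x₀ (i, j)) w ∧ x₀ = update x₀ (i, j) w ∧
        a = c' + Pi.single i (f (i, j) w - f (i, j) (x₀ (i, j))) ∧
        b = c'' + Pi.single j (g (i, j) w - g (i, j) (x₀ (i, j))) := by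
      rintro ⟨i, j, w, hadj, hx, -⟩
      exact hadj.ne (by simpa using congrFun hx (i, j))
    simp only [boxProd_near_iff, add_right_inj, hammingGraph_adj_add_left, hno_move]
    simp
  · constructor
    · rintro ⟨hadj, -, heq⟩
      obtain ⟨⟨i, j⟩, hadj, hoff⟩ := hadj.resolve_left hx.symm
      replace heq := heq.resolve_left hx.symm
      have hx₀ : x₀ = update x (i, j) (x₀ (i, j)) :=
        eq_update_iff.2 ⟨rfl, fun q hq => (hoff q hq).symm⟩
      simp only [Prod.mk.injEq] at heq
      rw [hx₀, rowSum_update, colSum_update] at heq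
      refine .inr ⟨i, j, x₀ (i, j), hadj, hx₀, ?_, ?_⟩
      · exact add_left_cancel (heq.1.trans (by abel))
      · exact add_left_cancel (heq.2.trans (by abel))
    · rintro (⟨rfl, -⟩ | ⟨i, j, w, hadj, rfl, rfl, rfl⟩)
      · exact absurd rfl hx
      refine ⟨.inr ⟨(i, j), by simpa using hadj, fun q hq => by simp [hq]⟩, .inl ?_, .inr ?_⟩ <;>
        · rw [rowSum_update, colSum_update]
          ext <;> simp only [Pi.add_apply] <;> abel

lemma near_of_near_productCode {x x₀ : ∀ p, W p} {a c' : ι → A} {b c'' : κ → A}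
    (h : (x, rowSum f x + a, colSum g x + b) = (x₀, rowSum f x₀ + c', colSum g x₀ + c'') ∨
      (boxPi G □ (hammingGraph ι A □ hammingGraph κ A)).Adj
        (x, rowSum f x + a, colSum g x + b) (x₀, rowSum f x₀ + c', colSum g x₀ + c'')) :
    (a = c' ∨ (hammingGraph ι A).Adj a c') ∧ (b = c'' ∨ (hammingGraph κ A).Adj b c'') := by
  rcases near_productCode_iff.1 h with ⟨-, ha, hb, -⟩ | ⟨i, j, w, -, -, rfl, rfl⟩
  · exact ⟨ha, hb⟩
  · exact ⟨hammingGraph_near_add_single _ _ _, hammingGraph_near_add_single _ _ _⟩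

lemma existsUnique_near_productCode
    (hcell : ∀ p, IsPerfectCode (G p □ ((⊤ : SimpleGraph A) □ (⊤ : SimpleGraph A)))
      (graphCode (f p) (g p)))
    (x : ∀ p, W p) {a c' : ι → A} {b c'' : κ → A}
    (ha : a = c' ∨ (hammingGraph ι A).Adj a c') (hb : b = c'' ∨ (hammingGraph κ A).Adj b c'') :
    ∃! x₀, (x, rowSum f x + a, colSum g x + b) = (x₀, rowSum f x₀ + c', colSum g x₀ + c'') ∨
      (boxPi G □ (hammingGraph ι A □ hammingGraph κ A)).Adj
        (x, rowSum f x + a, colSum g x + b) (x₀, rowSum f x₀ + c', colSum g x₀ + c'') := by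
  by_cases hab : a = c' ∨ b = c''
  · refine ⟨x, near_productCode_iff.2 (.inl ⟨rfl, ha, hb, hab⟩), fun x₀ hx₀ => ?_⟩
    rcases near_productCode_iff.1 hx₀ with ⟨rfl, -⟩ | ⟨i, j, w, hadj, -, ha', hb'⟩
    · rfl
    obtain ⟨hf, hg⟩ := (hcell (i, j)).graphCode_ne_of_adj hadj
    rcases hab with rfl | rfl
    · simp [sub_eq_zero, hf] at ha'
    · simp [sub_eq_zero, hg] at hb'
  obtain ⟨hac, hbc⟩ := not_or.1 hab
  obtain ⟨i, δ, hδ, rfl⟩ := hammingGraph_adj_iff.1 (ha.resolve_left hac)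
  obtain ⟨j, γ, hγ, rfl⟩ := hammingGraph_adj_iff.1 (hb.resolve_left hbc)
  obtain ⟨w, hadj, hfw, hgw⟩ := (hcell (i, j)).graphCode_exists_adj
    (u := x (i, j)) (s := f (i, j) (x (i, j)) + δ) (t := g (i, j) (x (i, j)) + γ)
    (by simpa) (by simpa)
  refine ⟨update x (i, j) w, near_productCode_iff.2
    (.inr ⟨i, j, w, hadj, rfl, by simp [hfw], by simp [hgw]⟩), fun x₀ hx₀ => ?_⟩
  rcases near_productCode_iff.1 hx₀ with ⟨-, -, -, hab'⟩ | ⟨i', j', w', hadj', rfl, ha', hb'⟩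
  · simp [hδ, hγ] at hab'
  obtain ⟨hf', hg'⟩ := (hcell (i', j')).graphCode_ne_of_adj hadj'
  obtain ⟨rfl, hδ'⟩ := Pi.single_eq_single_of_ne_zero (add_left_cancel ha') (sub_ne_zero.2 hf')
  obtain ⟨rfl, hγ'⟩ := Pi.single_eq_single_of_ne_zero (add_left_cancel hb') (sub_ne_zero.2 hg')
  rw [(hcell (i, j)).graphCode_unique_adj hadj hadj' (by rw [hfw, hδ']; abel)
    (by rw [hgw, hγ']; abel)]

theorem isPerfectCode_productCode
    (hcell : ∀ p, IsPerfectCode (G p □ ((⊤ : SimpleGraph A) □ (⊤ : SimpleGraph A)))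
      (graphCode (f p) (g p)))
    {C' : Set (ι → A)} {C'' : Set (κ → A)}
    (hC' : IsPerfectCode (hammingGraph ι A) C') (hC'' : IsPerfectCode (hammingGraph κ A) C'') :
    IsPerfectCode (boxPi G □ (hammingGraph ι A □ hammingGraph κ A)) (productCode f g C' C'') := by
  rintro ⟨x, y, z⟩
  obtain ⟨a, rfl⟩ : ∃ a, y = rowSum f x + a := ⟨y - rowSum f x, by abel⟩
  obtain ⟨b, rfl⟩ : ∃ b, z = colSum g x + b := ⟨z - colSum g x, by abel⟩
  obtain ⟨c', ⟨hc', ha⟩, hc'_unique⟩ := hC' a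
  obtain ⟨c'', ⟨hc'', hb⟩, hc''_unique⟩ := hC'' b
  obtain ⟨x₀, hx₀, hx₀_unique⟩ := existsUnique_near_productCode hcell x ha hb
  refine ⟨_, ⟨⟨x₀, c', c'', hc', hc'', rfl⟩, hx₀⟩, ?_⟩
  rintro _ ⟨⟨x₁, c₁', c₁'', hc₁', hc₁'', rfl⟩, hx₁⟩
  obtain ⟨ha₁, hb₁⟩ := near_of_near_productCode hx₁
  obtain rfl := hc'_unique c₁' ⟨hc₁', ha₁⟩
  obtain rfl := hc''_unique c₁'' ⟨hc₁'', hb₁⟩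
  rw [hx₀_unique x₁ hx₁]

end ProductCode

section DoobIso

def graphCastIso {V W : Type} (h : V = W) (G : SimpleGraph V) :
    G ≃g cast (congrArg SimpleGraph h) G := by
  subst h
  exact Iso.refl

variable {k r : ℕ} (M : Finset (Fin k × Fin r))

noncomputable def cellGraphIsoOfMem {p : Fin k × Fin r} (h : p ∈ M) :
    CellGraph M p ≃g ShE □ (⊤ : SimpleGraph E2) := by
  rw [CellGraph, dif_pos h]
  exact (graphCastIso (if_pos h).symm _).symm

noncomputable def cellGraphIsoOfNotMem {p : Fin k × Fin r} (h : p ∉ M) :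
    CellGraph M p ≃g boxPi fun _ : Fin 3 => (⊤ : SimpleGraph E2) := by
  rw [CellGraph, dif_neg h]
  exact (graphCastIso (if_neg h).symm _).symm

noncomputable def boxPiCellGraphIso :
    boxPi (CellGraph M) ≃g
      ((boxPi fun _ : {p // p ∈ M} => ShE) □ (boxPi fun _ : {p // p ∈ M} => (⊤ : SimpleGraph E2))) □
        (boxPi fun _ : {p // p ∉ M} × Fin 3 => (⊤ : SimpleGraph E2)) :=
  (boxPiCongr (G := fun s => CellGraph M (Equiv.sumCompl (· ∈ M) s)) (Equiv.sumCompl _)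
    fun _ => Iso.refl).symm.trans <| (boxPiSum _).trans <| boxProdCongr
      ((boxPiCongrRight fun p => cellGraphIsoOfMem M p.2).trans (boxPiBoxProd _ _))
      ((boxPiCongrRight fun p => cellGraphIsoOfNotMem M p.2).trans (boxPiCurry fun _ _ => ⊤).symm)

noncomputable def bigGraphIsoDoobE {m : ℕ} (hM : M.card = m) :
    BigGraph k r M ≃g DoobE m (3 * k * r - 2 * m + k + r) := by
  have hm : m ≤ k * r := hM ▸ (M.card_le_univ.trans_eq (by simp))
  have hA : Fintype.card {p // p ∈ M} = m := by simp [hM]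
  have hN : Fintype.card ({p // p ∈ M} ⊕ ({p // p ∉ M} × Fin 3 ⊕ (Fin k ⊕ Fin r))) =
      3 * k * r - 2 * m + k + r := by
    simp only [Fintype.card_sum, Fintype.card_prod, Fintype.card_subtype_compl, hA,
      Fintype.card_fin, mul_assoc]
    omega
  exact (boxProdCongr (boxPiCellGraphIso M) Iso.refl).trans <| (boxProdAssoc _ _ _).trans <|
    (boxProdAssoc _ _ _).trans <| boxProdCongr
      (boxPiConstCongr (Fintype.equivFinOfCardEq hA) _)
      ((boxProdCongr Iso.refl ((boxProdCongr Iso.refl (boxPiSum fun _ => ⊤).symm).trans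
        (boxPiSum fun _ => ⊤).symm)).trans <| (boxPiSum fun _ => ⊤).symm.trans
          (boxPiConstCongr (Fintype.equivFinOfCardEq hN) _))

end DoobIso

theorem perfect_code_modified_product_construction_general (k r m : ℕ)
    (M : Finset (Fin k × Fin r)) (hM : M.card = m)
    (f g : ∀ p : Fin k × Fin r, CellVtx M p → E2)
    (hcell : ∀ p : Fin k × Fin r,
      IsPerfectCode (CellGraph M p □ ((⊤ : SimpleGraph E2) □ (⊤ : SimpleGraph E2)))
        {q : CellVtx M p × E2 × E2 | ∃ x : CellVtx M p, q = (x, f p x, g p x)})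
    (C' : Set (Fin k → E2)) (hC' : IsPerfectCode (HamE k) C')
    (C'' : Set (Fin r → E2)) (hC'' : IsPerfectCode (HamE r) C'') :
    IsPerfectCode (BigGraph k r M)
      {q : (∀ p : Fin k × Fin r, CellVtx M p) × (Fin k → E2) × (Fin r → E2) |
        ∃ (x : ∀ p : Fin k × Fin r, CellVtx M p) (c' : Fin k → E2) (c'' : Fin r → E2),
          c' ∈ C' ∧ c'' ∈ C'' ∧
          q = (x, fun i => (∑ j : Fin r, f (i, j) (x (i, j))) + c' i,
                  fun j => (∑ i : Fin k, g (i, j) (x (i, j))) + c'' j)} ∧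
    Nonempty (BigGraph k r M ≃g DoobE m (3 * k * r - 2 * m + k + r)) :=
  ⟨isPerfectCode_productCode hcell hC' hC'', ⟨bigGraphIsoDoobE M hM⟩⟩

theorem perfect_code_modified_product_construction (k r m : ℕ)
    (hk : 1 ≤ k) (hr : 1 ≤ r) (hm : m ≤ k * r)
    (M : Finset (Fin k × Fin r)) (hM : M.card = m)
    (f g : ∀ p : Fin k × Fin r, CellVtx M p → E2)
    (hcell : ∀ p : Fin k × Fin r,
      IsPerfectCode (CellGraph M p □ ((⊤ : SimpleGraph E2) □ (⊤ : SimpleGraph E2)))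
        {q : CellVtx M p × E2 × E2 | ∃ x : CellVtx M p, q = (x, f p x, g p x)})
    (C' : Set (Fin k → E2)) (hC' : IsPerfectCode (HamE k) C')
    (C'' : Set (Fin r → E2)) (hC'' : IsPerfectCode (HamE r) C'') :
    IsPerfectCode (BigGraph k r M)
      {q : (∀ p : Fin k × Fin r, CellVtx M p) × (Fin k → E2) × (Fin r → E2) |
        ∃ (x : ∀ p : Fin k × Fin r, CellVtx M p) (c' : Fin k → E2) (c'' : Fin r → E2),
          c' ∈ C' ∧ c'' ∈ C'' ∧
          q = (x, fun i => (∑ j : Fin r, f (i, j) (x (i, j))) + c' i,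
                  fun j => (∑ i : Fin k, g (i, j) (x (i, j))) + c'' j)} ∧
    Nonempty (BigGraph k r M ≃g DoobE m (3 * k * r - 2 * m + k + r)) :=
  perfect_code_modified_product_construction_general k r m M hM f g hcell C' hC' C'' hC''
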